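/- arXiv:0708.1363 — 4 statements merged into one kernel-verified Lean document; each statement's English description precedes it below -/
import Mathlib

section
/- Let k be a field of characteristic zero and n ≥ 1. If X ∈ sp_{2n}(k) is nilpotent, then every odd part of the Jordan type of X occurs with even multiplicity. -/
open Matrix

/-- The standard symplectic matrix `J = [[0, I_n], [-I_n, 0]]` as a `2n × 2n` matrix. -/
def sympJ (k : Type) [Field k] (n : ℕ) : Matrix (Fin (2 * n)) (Fin (2 * n)) k :=
  fun i j =>
    if (i : ℕ) + n = (j : ℕ) then 1
    else if (j : ℕ) + n = (i : ℕ) then -1 else 0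

/-- `X` has Jordan type `μ`: for every `j ≥ 1`, the multiplicity of `j` as a part of `μ`
is `rank(X^(j-1)) - 2 rank(X^j) + rank(X^(j+1))`. -/
def HasJordanType (k : Type) [Field k] {N : ℕ} (X : Matrix (Fin N) (Fin N) k)
    (μ : Nat.Partition N) : Prop :=
  ∀ j : ℕ, 1 ≤ j →
    (μ.parts.count j : ℤ) =
      ((X ^ (j - 1)).rank : ℤ) - 2 * ((X ^ j).rank : ℤ) + ((X ^ (j + 1)).rank : ℤ)

/-!
If `Xᵀ J = -J X` with `J` invertible and skew-symmetric, then for even `m` the matrix `J X^m`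
is skew-symmetric, and a skew-symmetric matrix has even rank in characteristic `≠ 2`. Hence
`rank X^m` is even for every even `m`, and for odd `j` the multiplicity
`rank X^(j-1) - 2 rank X^j + rank X^(j+1)` is even.
-/

namespace Matrix

variable {k n : Type*} [Field k] [Fintype n] [DecidableEq n]

theorem det_eq_zero_of_transpose_eq_neg [NeZero (2 : k)] {A : Matrix n n k} (hA : Aᵀ = -A)
    (hn : Odd (Fintype.card n)) : A.det = 0 := by
  have h := det_transpose A
  rw [hA, det_neg, hn.neg_one_pow, neg_one_mul, neg_eq_iff_add_eq_zero, ← two_mul] at h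
  exact (mul_eq_zero.mp h).resolve_left two_ne_zero

end Matrix

namespace LinearMap

namespace BilinForm

variable {K V : Type*} [Field K] [AddCommGroup V] [Module K V] [FiniteDimensional K V]

theorem even_finrank_of_nondegenerate [NeZero (2 : K)] {B : LinearMap.BilinForm K V}
    (hB : B.Nondegenerate) (hskew : ∀ x y, B y x = -B x y) : Even (Module.finrank K V) := by
  set b := Module.finBasis K V
  by_contra hodd
  have hT : (toMatrix b B)ᵀ = -toMatrix b B := by
    ext i j
    simpa only [transpose_apply, Matrix.neg_apply, toMatrix_apply] using hskew (b i) (b j)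
  exact (nondegenerate_iff_det_ne_zero b).mp hB
    (det_eq_zero_of_transpose_eq_neg hT (by simpa using hodd))

theorem nondegenerate_restrict_of_isCompl_ker {B : LinearMap.BilinForm K V} (hB : B.IsRefl)
    {W : Submodule K V} (hW : IsCompl W (LinearMap.ker B)) : (B.restrict W).Nondegenerate := by
  rw [nondegenerate_iff_ker_eq_bot, ker_restrict_eq_of_codisjoint hW.codisjoint,
    ← Submodule.disjoint_iff_comap_eq_bot]
  · exact hW.disjoint
  · intro x _ y hy
    exact hB y x (by simp [LinearMap.mem_ker.mp hy])

end BilinForm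

end LinearMap

namespace Matrix

variable {k n : Type*} [Field k] [Fintype n] [DecidableEq n]

theorem ker_toBilin'_transpose (A : Matrix n n k) :
    LinearMap.ker (toBilin' Aᵀ) = LinearMap.ker A.mulVecLin := by
  ext x
  simp only [LinearMap.mem_ker, LinearMap.ext_iff, toBilin'_apply', dotProduct_mulVec,
    vecMul_transpose, LinearMap.zero_apply, dotProduct_eq_zero_iff, mulVecLin_apply]

theorem even_rank_of_transpose_eq_neg [NeZero (2 : k)] {A : Matrix n n k} (hA : Aᵀ = -A) :
    Even A.rank := by
  -- `B x y = (A x) ⬝ᵥ y`, whose left kernel is `ker A`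
  set B := toBilin' Aᵀ
  have hskew : ∀ x y, B y x = -B x y := fun x y => by
    rw [toBilin'_apply', toBilin'_apply', dotProduct_mulVec, vecMul_transpose, dotProduct_comm,
      hA, neg_mulVec, dotProduct_neg, neg_neg]
  obtain ⟨W, hW⟩ := (LinearMap.ker B).exists_isCompl
  have hrank : A.rank = Module.finrank k W := by
    have := LinearMap.finrank_range_add_finrank_ker A.mulVecLin
    have := Submodule.finrank_add_eq_of_isCompl hW
    rw [ker_toBilin'_transpose] at this
    rw [rank]
    omega
  have hrefl : B.IsRefl := fun x y h => by rw [hskew, h, neg_zero]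
  rw [hrank]
  exact LinearMap.BilinForm.even_finrank_of_nondegenerate
    (LinearMap.BilinForm.nondegenerate_restrict_of_isCompl_ker hrefl hW.symm)
    (fun x y => hskew x y)

variable {R : Type*} [CommRing R]

theorem IsAdjointPair.pow {J A B : Matrix n n R} (h : IsAdjointPair J J A B) (m : ℕ) :
    IsAdjointPair J J (A ^ m) (B ^ m) := by
  induction m with
  | zero => simp [IsAdjointPair]
  | succ m ih =>
    rw [IsAdjointPair, pow_succ, pow_succ', transpose_mul, Matrix.mul_assoc, ih,
      ← Matrix.mul_assoc, h, Matrix.mul_assoc]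

theorem IsSkewAdjoint.transpose_mul_pow_eq_neg {J X : Matrix n n R} (hJ : Jᵀ = -J)
    (hX : J.IsSkewAdjoint X) {m : ℕ} (hm : Even m) : (J * X ^ m)ᵀ = -(J * X ^ m) := by
  rw [transpose_mul, hJ, Matrix.mul_neg, IsAdjointPair.pow hX m, hm.neg_pow]

theorem IsSkewAdjoint.even_rank_pow [NeZero (2 : k)] {J X : Matrix n n k} (hJ : Jᵀ = -J)
    (hJdet : IsUnit J.det) (hX : J.IsSkewAdjoint X) {m : ℕ} (hm : Even m) :
    Even (X ^ m).rank := by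
  rw [← rank_mul_eq_right_of_isUnit_det J _ hJdet]
  exact even_rank_of_transpose_eq_neg (hX.transpose_mul_pow_eq_neg hJ hm)

end Matrix

-- Mathlib's `J` is `[[0, -I], [I, 0]]`, the negative of `sympJ` up to the block reindexing.
theorem sympJ_eq_neg_reindex_J (k : Type) [Field k] (n : ℕ) :
    ∃ e : Fin n ⊕ Fin n ≃ Fin (2 * n), sympJ k n = -reindex e e (J (Fin n) k) := by
  let e : Fin n ⊕ Fin n ≃ Fin (2 * n) := finSumFinEquiv.trans (finCongr (two_mul n).symm)
  refine ⟨e, ?_⟩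
  ext i j
  obtain ⟨i, rfl⟩ := e.surjective i
  obtain ⟨j, rfl⟩ := e.surjective j
  rw [neg_apply, reindex_apply, submatrix_apply, Equiv.symm_apply_apply, Equiv.symm_apply_apply]
  rcases i with i | i <;> rcases j with j | j <;>
    simp [e, sympJ, J, one_apply, Fin.ext_iff] <;> split_ifs <;> first | omega | simp

theorem sympJ_transpose (k : Type) [Field k] (n : ℕ) : (sympJ k n)ᵀ = -sympJ k n := by
  obtain ⟨e, he⟩ := sympJ_eq_neg_reindex_J k n
  simp [he, submatrix_neg]

theorem isUnit_det_sympJ (k : Type) [Field k] (n : ℕ) : IsUnit (sympJ k n).det := by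
  obtain ⟨e, he⟩ := sympJ_eq_neg_reindex_J k n
  rw [he, det_neg, det_reindex_self]
  exact (isUnit_neg_one.pow _).mul (isUnit_det_J _ _)

theorem HasJordanType.even_count_of_odd {k : Type} [Field k] {N : ℕ}
    {X : Matrix (Fin N) (Fin N) k} {μ : Nat.Partition N} (hμ : HasJordanType k X μ)
    (hX : ∀ m, Even m → Even (X ^ m).rank) {j : ℕ} (hj : Odd j) : Even (μ.parts.count j) := by
  obtain ⟨a, ha⟩ := (hX (j - 1) (Nat.Odd.sub_odd hj odd_one)).natCast (α := ℤ)
  obtain ⟨c, hc⟩ := (hX (j + 1) hj.add_one).natCast (α := ℤ)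
  have hcount := hμ j hj.pos
  rw [ha, hc] at hcount
  exact (Int.even_coe_nat _).mp ⟨a - (X ^ j).rank + c, by rw [hcount]; ring⟩

theorem stmt2_general (k : Type) [Field k] [CharZero k] (n : ℕ)
    (X : Matrix (Fin (2 * n)) (Fin (2 * n)) k)
    (hsp : Xᵀ * sympJ k n + sympJ k n * X = 0)
    (μ : Nat.Partition (2 * n)) (hμ : HasJordanType k X μ) :
    ∀ j : ℕ, Odd j → Even (μ.parts.count j) := by
  have hX : (sympJ k n).IsSkewAdjoint X := by
    rw [Matrix.IsSkewAdjoint, IsAdjointPair, Matrix.mul_neg]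
    exact eq_neg_of_add_eq_zero_left hsp
  exact fun j hj => hμ.even_count_of_odd
    (fun m hm => hX.even_rank_pow (sympJ_transpose k n) (isUnit_det_sympJ k n) hm) hj

/-- If `X ∈ sp_{2n}(k)` is nilpotent (char k = 0), then every odd part of the Jordan
type of `X` occurs with even multiplicity. -/
theorem stmt2 (k : Type) [Field k] [CharZero k] (n : ℕ) (hn : 1 ≤ n)
    (X : Matrix (Fin (2 * n)) (Fin (2 * n)) k)
    (hsp : Xᵀ * sympJ k n + sympJ k n * X = 0)
    (hX : IsNilpotent X)
    (μ : Nat.Partition (2 * n)) (hμ : HasJordanType k X μ) :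
    ∀ j : ℕ, Odd j → Even (μ.parts.count j) :=
  stmt2_general k n X hsp μ hμ
end

section
/- Let k be a field of characteristic zero, n ≥ 2, let λ and λ' be partitions of n, and let d, d' ∈ k^×. Set m = gcd(λ). Then J_λ D(d) and J_{λ'} D(d') are conjugate under SL_n(k) if and only if λ = λ' and d·d'^{-1} ∈ (k^×)^m, the subgroup of m-th powers in k^×. -/
open Matrix

/-- Given the list of block sizes `L` and a (0-based) index `i`, return the pair
`(s, pos)` where `s` is the size of the block containing index `i` and `pos` is the
position of `i` within that block. -/
def blockFind : List ℕ → ℕ → ℕ × ℕ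
  | [], i => (0, i)
  | s :: L, i => if i < s then (s, i) else blockFind L (i - s)

/-- The list of parts of a partition, in weakly decreasing order. -/
def partsList {n : ℕ} (μ : Nat.Partition n) : List ℕ :=
  (μ.parts.sort (· ≤ ·)).reverse

/-- The nilpotent Jordan matrix `J_μ` associated to a partition `μ` of `n`. -/
def jordanMat (k : Type) [Field k] {n : ℕ} (μ : Nat.Partition n) :
    Matrix (Fin n) (Fin n) k :=
  fun i j =>
    if (j : ℕ) = (i : ℕ) + 1 ∧
        (blockFind (partsList μ) (i : ℕ)).2 + 1 < (blockFind (partsList μ) (i : ℕ)).1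
    then 1 else 0

/-- The diagonal matrix `D(d) = diag(1, …, 1, d)`. -/
def Dmat (k : Type) [Field k] (n : ℕ) (d : k) : Matrix (Fin n) (Fin n) k :=
  Matrix.diagonal fun i => if (i : ℕ) = n - 1 then d else 1

/-- Conjugacy under `SL_n(k)`: there is `g` with `det g = 1` and `g * X * g⁻¹ = Y`. -/
def SLConj (k : Type) [Field k] {n : ℕ} (X Y : Matrix (Fin n) (Fin n) k) : Prop :=
  ∃ g : Matrix (Fin n) (Fin n) k, g.det = 1 ∧ g * X * g⁻¹ = Y

/-!
Since the last row of `J_λ` vanishes, `D(d) J_λ = J_λ`, so `J_λ D(d) = D(d)⁻¹ J_λ D(d)`.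
Hence the two matrices are `SL_n`-conjugate iff some `u` with `det u = d' / d` satisfies
`u J_λ = J_λ' u`. The ranks `∑ᵢ (λᵢ - r)⁺` of the powers `J_λ ^ r` determine `λ`, so
`λ = λ'` and `u` commutes with `J_λ`. Order the indices by their position in their Jordan
block, then by decreasing block size: `u` is block upper triangular for this order, and its
diagonal block at position `p` among the Jordan blocks of size `s` does not depend on `p`.
So `det u` is a product of `s`-th powers, `s` running over the parts, hence an `m`-th power.
Conversely, a matrix that is scalar on each Jordan block commutes with `J_λ`, and by Bezout
its determinant can be any `m`-th power.
-/

lemma Finset.prod_zpow_eq_zpow_sum {ι K : Type*} [CommGroupWithZero K] {a : K} (ha : a ≠ 0)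
    (s : Finset ι) (f : ι → ℤ) : ∏ i ∈ s, a ^ f i = a ^ ∑ i ∈ s, f i := by
  classical
  induction s using Finset.induction_on with
  | empty => simp
  | insert i s hi ih => rw [Finset.prod_insert hi, Finset.sum_insert hi, ih, zpow_add₀ ha]

lemma Multiset.sum_map_tsub_pred_add_sum_map_tsub_succ (s : Multiset ℕ) {a : ℕ} (ha : 1 ≤ a) :
    (s.map (· - (a - 1))).sum + (s.map (· - (a + 1))).sum =
      2 * (s.map (· - a)).sum + s.count a := by
  induction s using Multiset.induction_on with
  | empty => simp
  | cons x s ih =>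
    simp only [Multiset.map_cons, Multiset.sum_cons, Multiset.count_cons]
    split_ifs <;> omega

lemma Multiset.eq_of_forall_sum_map_tsub_eq {s t : Multiset ℕ} (hs : 0 ∉ s) (ht : 0 ∉ t)
    (h : ∀ r, (s.map (· - r)).sum = (t.map (· - r)).sum) : s = t := by
  ext a
  rcases Nat.eq_zero_or_pos a with rfl | ha
  · rw [Multiset.count_eq_zero.mpr hs, Multiset.count_eq_zero.mpr ht]
  · have hs' := s.sum_map_tsub_pred_add_sum_map_tsub_succ ha
    have ht' := t.sum_map_tsub_pred_add_sum_map_tsub_succ ha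
    rw [h, h, h] at hs'
    omega

section Conj

variable {m R : Type*} [Fintype m] [DecidableEq m] [CommRing R] {g X Y : Matrix m m R}

lemma mul_mul_nonsing_inv_eq_iff_semiconjBy (hg : IsUnit g.det) :
    g * X * g⁻¹ = Y ↔ SemiconjBy g X Y :=
  ⟨fun h => by rw [SemiconjBy, ← h, nonsing_inv_mul_cancel_right _ _ hg],
    fun h => by rw [h.eq, mul_nonsing_inv_cancel_right _ _ hg]⟩

lemma semiconjBy_from_nonsing_inv_mul_mul (hg : IsUnit g.det) :
    SemiconjBy g (g⁻¹ * X * g) X := by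
  rw [SemiconjBy, ← mul_assoc, ← mul_assoc, mul_nonsing_inv _ hg, one_mul]

lemma semiconjBy_to_nonsing_inv_mul_mul (hg : IsUnit g.det) :
    SemiconjBy g⁻¹ X (g⁻¹ * X * g) := by
  rw [SemiconjBy, mul_nonsing_inv_cancel_right _ _ hg]

end Conj

lemma slConj_inv_mul_mul_iff {k : Type} [Field k] {n : ℕ} {X Y P Q : Matrix (Fin n) (Fin n) k}
    (hP : IsUnit P.det) (hQ : IsUnit Q.det) :
    SLConj k (P⁻¹ * X * P) (Q⁻¹ * Y * Q) ↔
      ∃ u : Matrix (Fin n) (Fin n) k, u.det = Q.det / P.det ∧ SemiconjBy u X Y := by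
  constructor
  · rintro ⟨g, hg, h⟩
    rw [mul_mul_nonsing_inv_eq_iff_semiconjBy (by simp [hg])] at h
    refine ⟨Q * g * P⁻¹, ?_, ?_⟩
    · rw [det_mul, det_mul, hg, det_nonsing_inv, Ring.inverse_eq_inv, mul_one, div_eq_mul_inv]
    · exact ((semiconjBy_from_nonsing_inv_mul_mul hQ).mul_left h).mul_left
        (semiconjBy_to_nonsing_inv_mul_mul hP)
  · rintro ⟨u, hu, h⟩
    have hdet : (Q⁻¹ * u * P).det = 1 := by
      rw [det_mul, det_mul, hu, det_nonsing_inv, Ring.inverse_eq_inv]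
      field_simp [hQ.ne_zero, hP.ne_zero]
    refine ⟨Q⁻¹ * u * P, hdet, ?_⟩
    rw [mul_mul_nonsing_inv_eq_iff_semiconjBy (by simp [hdet])]
    exact ((semiconjBy_to_nonsing_inv_mul_mul hQ).mul_left h).mul_left
      (semiconjBy_from_nonsing_inv_mul_mul hP)

section BlockFind

variable {L : List ℕ} {s i p r : ℕ}

lemma blockFind_cons_of_lt (L : List ℕ) (h : i < s) : blockFind (s :: L) i = (s, i) := by
  simp [blockFind, h]

lemma blockFind_cons_of_not_lt (L : List ℕ) (h : ¬i < s) :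
    blockFind (s :: L) i = blockFind L (i - s) := by
  simp [blockFind, h]

lemma blockFind_snd_le : ∀ (L : List ℕ) (i : ℕ), (blockFind L i).2 ≤ i
  | [], _ => le_rfl
  | s :: L, i => by
    by_cases h : i < s
    · simp [blockFind_cons_of_lt L h]
    · rw [blockFind_cons_of_not_lt L h]
      exact (blockFind_snd_le L (i - s)).trans (Nat.sub_le i s)

lemma blockFind_snd_lt_fst_and_fst_mem (hi : i < L.sum) :
    (blockFind L i).2 < (blockFind L i).1 ∧ (blockFind L i).1 ∈ L := by
  induction L generalizing i with
  | nil => simp at hi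
  | cons s L ih =>
    by_cases h : i < s
    · simp [blockFind_cons_of_lt L h, h]
    · rw [blockFind_cons_of_not_lt L h]
      have := ih (i := i - s) (by simp only [List.sum_cons] at hi; omega)
      exact ⟨this.1, List.mem_cons_of_mem s this.2⟩

lemma blockFind_add_of_snd_add_lt (h : (blockFind L i).2 + r < (blockFind L i).1) :
    blockFind L (i + r) = ((blockFind L i).1, (blockFind L i).2 + r) ∧ i + r < L.sum := by
  induction L generalizing i with
  | nil => simp [blockFind] at h
  | cons s L ih =>
    by_cases hi : i < s
    · rw [blockFind_cons_of_lt L hi] at h ⊢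
      simp only [List.sum_cons]
      exact ⟨blockFind_cons_of_lt L h, by omega⟩
    · rw [blockFind_cons_of_not_lt L hi] at h ⊢
      obtain ⟨h1, h2⟩ := ih h
      rw [blockFind_cons_of_not_lt L (by omega), show i + r - s = i - s + r by omega, h1]
      simp only [List.sum_cons]
      exact ⟨by simp, by omega⟩

lemma blockFind_sub_of_le_snd (h : r ≤ (blockFind L i).2) :
    blockFind L (i - r) = ((blockFind L i).1, (blockFind L i).2 - r) := by
  induction L generalizing i with
  | nil => simp [blockFind] at h ⊢
  | cons s L ih =>
    by_cases hi : i < s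
    · rw [blockFind_cons_of_lt L hi] at h ⊢
      exact blockFind_cons_of_lt L (by omega)
    · rw [blockFind_cons_of_not_lt L hi] at h ⊢
      have := blockFind_snd_le L (i - s)
      rw [blockFind_cons_of_not_lt L (by omega), show i - r - s = i - s - r by omega, ih h]

lemma exists_blockFind_eq (hs : s ∈ L) (hp : p < s) : ∃ i < L.sum, blockFind L i = (s, p) := by
  induction L with
  | nil => simp at hs
  | cons a L ih =>
    rcases List.mem_cons.mp hs with rfl | hs
    · exact ⟨p, by simp only [List.sum_cons]; omega, blockFind_cons_of_lt L hp⟩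
    · obtain ⟨i, hi, hbf⟩ := ih hs
      refine ⟨a + i, by simp only [List.sum_cons]; omega, ?_⟩
      rw [blockFind_cons_of_not_lt L (by omega), Nat.add_sub_cancel_left, hbf]

lemma sum_range_blockFind {M : Type*} [AddCommMonoid M] (L : List ℕ) (f : ℕ × ℕ → M) :
    ∑ i ∈ Finset.range L.sum, f (blockFind L i) =
      (L.map fun s => ∑ p ∈ Finset.range s, f (s, p)).sum := by
  induction L with
  | nil => simp
  | cons s L ih =>
    rw [List.sum_cons, Finset.sum_range_add, List.map_cons, List.sum_cons, ← ih]
    congr 1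
    · exact Finset.sum_congr rfl fun i hi => by
        rw [blockFind_cons_of_lt L (Finset.mem_range.mp hi)]
    · exact Finset.sum_congr rfl fun i _ => by
        rw [blockFind_cons_of_not_lt L (by omega), Nat.add_sub_cancel_left]

-- `i - (blockFind L i).2` is the first index of the block containing `i`.
lemma exists_sum_weight_blockStart_eq_gcd (L : List ℕ) :
    ∃ W : ℕ → ℤ,
      ∑ i ∈ Finset.range L.sum, W (i - (blockFind L i).2) = (L : Multiset ℕ).gcd := by
  induction L with
  | nil => exact ⟨0, by simp⟩
  | cons s L ih =>
    obtain ⟨W, hW⟩ := ih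
    set g := (L : Multiset ℕ).gcd
    refine ⟨fun x => if x < s then Nat.gcdA s g else Nat.gcdB s g * W (x - s), ?_⟩
    have hhead : ∀ i ∈ Finset.range s,
        (if i - (blockFind (s :: L) i).2 < s then Nat.gcdA s g
          else Nat.gcdB s g * W (i - (blockFind (s :: L) i).2 - s)) = Nat.gcdA s g := by
      intro i hi
      rw [Finset.mem_range] at hi
      rw [blockFind_cons_of_lt L hi, if_pos (by omega)]
    have htail : ∀ i ∈ Finset.range L.sum,
        (if s + i - (blockFind (s :: L) (s + i)).2 < s then Nat.gcdA s g
          else Nat.gcdB s g * W (s + i - (blockFind (s :: L) (s + i)).2 - s)) =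
          Nat.gcdB s g * W (i - (blockFind L i).2) := by
      intro i _
      have := blockFind_snd_le L i
      rw [blockFind_cons_of_not_lt L (by omega), Nat.add_sub_cancel_left, if_neg (by omega)]
      congr 2
      omega
    rw [← Multiset.cons_coe, Multiset.gcd_cons, List.sum_cons, Finset.sum_range_add,
      Finset.sum_congr rfl hhead, Finset.sum_congr rfl htail, ← Finset.mul_sum, hW,
      Finset.sum_const, Finset.card_range, nsmul_eq_mul, mul_comm _ (g : ℤ)]
    exact (Nat.gcd_eq_gcd_ab s g).symm

end BlockFind

namespace Nat.Partition

variable {n : ℕ} (μ : Nat.Partition n) {i r : ℕ}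

lemma coe_partsList : (partsList μ : Multiset ℕ) = μ.parts := by
  rw [partsList, Multiset.coe_reverse, Multiset.sort_eq]

lemma sum_partsList : (partsList μ).sum = n := by
  rw [← Multiset.sum_coe, coe_partsList, μ.parts_sum]

lemma gcd_parts_ne_zero (hn : n ≠ 0) : μ.parts.gcd ≠ 0 := by
  rw [Ne, Multiset.gcd_eq_zero_iff]
  intro h
  exact hn (by rw [← μ.parts_sum, Multiset.sum_eq_zero h])

def blockSize (i : ℕ) : ℕ := (blockFind (partsList μ) i).1

def blockPos (i : ℕ) : ℕ := (blockFind (partsList μ) i).2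

lemma blockPos_le (i : ℕ) : μ.blockPos i ≤ i := blockFind_snd_le _ i

lemma blockPos_lt_blockSize (hi : i < n) : μ.blockPos i < μ.blockSize i :=
  (blockFind_snd_lt_fst_and_fst_mem (by rwa [sum_partsList])).1

lemma blockSize_mem (hi : i < n) : μ.blockSize i ∈ μ.parts := by
  rw [← coe_partsList, Multiset.mem_coe]
  exact (blockFind_snd_lt_fst_and_fst_mem (by rwa [sum_partsList])).2

section add

variable {μ} (h : μ.blockPos i + r < μ.blockSize i)
include h

lemma blockPos_add : μ.blockPos (i + r) = μ.blockPos i + r := by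
  simp [blockPos, (blockFind_add_of_snd_add_lt h).1]

lemma blockSize_add : μ.blockSize (i + r) = μ.blockSize i := by
  simp [blockSize, (blockFind_add_of_snd_add_lt h).1]

lemma add_lt_of_blockPos_add_lt : i + r < n :=
  μ.sum_partsList ▸ (blockFind_add_of_snd_add_lt h).2

end add

section sub

variable {μ} (h : r ≤ μ.blockPos i)
include h

lemma blockPos_sub : μ.blockPos (i - r) = μ.blockPos i - r := by
  simp [blockPos, blockFind_sub_of_le_snd h]

lemma blockSize_sub : μ.blockSize (i - r) = μ.blockSize i := by
  simp [blockSize, blockFind_sub_of_le_snd h]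

end sub

lemma exists_blockSize_blockPos {s p : ℕ} (hs : s ∈ μ.parts) (hp : p < s) :
    ∃ i < n, μ.blockSize i = s ∧ μ.blockPos i = p := by
  rw [← coe_partsList, Multiset.mem_coe] at hs
  obtain ⟨i, hi, h⟩ := exists_blockFind_eq hs hp
  exact ⟨i, μ.sum_partsList ▸ hi, by simp [blockSize, h], by simp [blockPos, h]⟩

lemma sum_range_blockSize_blockPos {M : Type*} [AddCommMonoid M] (f : ℕ → ℕ → M) :
    ∑ i ∈ Finset.range n, f (μ.blockSize i) (μ.blockPos i) =
      (μ.parts.map fun s => ∑ p ∈ Finset.range s, f s p).sum := by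
  rw [← coe_partsList, Multiset.map_coe, Multiset.sum_coe,
    ← sum_range_blockFind _ fun q => f q.1 q.2, sum_partsList]
  rfl

lemma exists_sum_weight_blockStart_eq_gcd :
    ∃ W : ℕ → ℤ, ∑ i ∈ Finset.range n, W (i - μ.blockPos i) = μ.parts.gcd := by
  have := _root_.exists_sum_weight_blockStart_eq_gcd (partsList μ)
  rwa [sum_partsList, coe_partsList] at this

def blockKey (i : Fin n) : ℕ ×ₗ ℕᵒᵈ :=
  toLex (μ.blockPos i, OrderDual.toDual (μ.blockSize i))

lemma blockKey_eq_toLex_iff {i : Fin n} {p s : ℕ} :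
    μ.blockKey i = toLex (p, OrderDual.toDual s) ↔ μ.blockPos i = p ∧ μ.blockSize i = s := by
  simp [blockKey]

lemma image_blockKey [DecidableEq (ℕ ×ₗ ℕᵒᵈ)] :
    Finset.univ.image μ.blockKey = (μ.parts.toFinset.sigma Finset.range).image
      fun x => toLex (x.2, OrderDual.toDual x.1) := by
  ext a
  simp only [Finset.mem_image, Finset.mem_univ, true_and, Finset.mem_sigma, Multiset.mem_toFinset,
    Finset.mem_range, Sigma.exists]
  constructor
  · rintro ⟨i, rfl⟩
    exact ⟨_, _, ⟨μ.blockSize_mem i.isLt, μ.blockPos_lt_blockSize i.isLt⟩, rfl⟩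
  · rintro ⟨s, p, ⟨hs, hp⟩, rfl⟩
    obtain ⟨i, hi, hsi, hpi⟩ := μ.exists_blockSize_blockPos hs hp
    exact ⟨⟨i, hi⟩, by simp [blockKey, hsi, hpi]⟩

end Nat.Partition

section JordanMat

variable {k : Type} [Field k] {n : ℕ} (μ : Nat.Partition n)

open Nat.Partition

lemma jordanMat_apply (i j : Fin n) :
    jordanMat k μ i j =
      if (j : ℕ) = i + 1 ∧ μ.blockPos i + 1 < μ.blockSize i then 1 else 0 :=
  rfl

lemma jordanMat_mul_apply (M : Matrix (Fin n) (Fin n) k) (i j : Fin n) :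
    (jordanMat k μ * M) i j =
      if h : μ.blockPos i + 1 < μ.blockSize i then M ⟨i + 1, add_lt_of_blockPos_add_lt h⟩ j
      else 0 := by
  split_ifs with h
  · rw [mul_apply, Finset.sum_eq_single ⟨i + 1, add_lt_of_blockPos_add_lt h⟩]
    · simp [jordanMat_apply, h]
    · intro l _ hl
      simp [jordanMat_apply, Fin.ext_iff.not.mp hl]
    · simp
  · simp [mul_apply, jordanMat_apply, h]

lemma mul_jordanMat_apply (M : Matrix (Fin n) (Fin n) k) (i j : Fin n) :
    (M * jordanMat k μ) i j =
      if 0 < μ.blockPos j then M i ⟨j - 1, (Nat.sub_le _ _).trans_lt j.isLt⟩ else 0 := by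
  split_ifs with h
  · have hs := blockSize_sub (μ := μ) (i := j) (r := 1) h
    have hp := blockPos_sub (μ := μ) (i := j) (r := 1) h
    have := μ.blockPos_lt_blockSize j.isLt
    have := μ.blockPos_le j
    rw [mul_apply, Finset.sum_eq_single ⟨j - 1, by omega⟩]
    · simp only [jordanMat_apply, hs, hp]
      rw [if_pos, mul_one]
      constructor <;> omega
    · intro l _ hl
      rw [jordanMat_apply, if_neg, mul_zero]
      rintro ⟨hjl, -⟩
      exact hl (Fin.ext (by simp only; omega))
    · simp
  · rw [mul_apply]
    refine Finset.sum_eq_zero fun l _ => ?_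
    rw [jordanMat_apply, if_neg, mul_zero]
    rintro ⟨hjl, hl⟩
    have := blockPos_add hl
    rw [← hjl] at this
    omega

lemma jordanMat_pow_apply (r : ℕ) (i j : Fin n) :
    (jordanMat k μ ^ r) i j =
      if (j : ℕ) = i + r ∧ μ.blockPos i + r < μ.blockSize i then 1 else 0 := by
  induction r generalizing i with
  | zero =>
    have := μ.blockPos_lt_blockSize i.isLt
    simp [one_apply, Fin.ext_iff, eq_comm, this]
  | succ r ih =>
    rw [pow_succ', jordanMat_mul_apply]
    by_cases h : μ.blockPos i + 1 < μ.blockSize i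
    · rw [dif_pos h, ih, blockPos_add h, blockSize_add h]
      simp only [add_assoc, add_comm 1 r]
    · rw [dif_neg h, if_neg (by omega)]

lemma jordanMat_pow_mul_transpose (r : ℕ) :
    jordanMat k μ ^ r * (jordanMat k μ ^ r)ᵀ =
      diagonal fun i : Fin n => if μ.blockPos i + r < μ.blockSize i then 1 else 0 := by
  ext i i'
  simp only [mul_apply, transpose_apply, jordanMat_pow_apply, diagonal_apply]
  by_cases hi : μ.blockPos i + r < μ.blockSize i
  · rw [Finset.sum_eq_single ⟨i + r, add_lt_of_blockPos_add_lt hi⟩]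
    · rcases eq_or_ne i i' with rfl | hne
      · simp [hi]
      · simp [hi, Fin.val_ne_of_ne hne, hne]
    · intro l _ hl
      simp [Fin.ext_iff.not.mp hl]
    · simp
  · simp [hi]

lemma diagonal_mul_jordanMat_pow (r : ℕ) :
    (diagonal fun i : Fin n => if μ.blockPos i + r < μ.blockSize i then 1 else 0) *
      jordanMat k μ ^ r = jordanMat k μ ^ r := by
  ext i j
  by_cases hi : μ.blockPos i + r < μ.blockSize i <;> simp [diagonal_mul, jordanMat_pow_apply, hi]

lemma rank_jordanMat_pow (r : ℕ) :
    (jordanMat k μ ^ r).rank = (μ.parts.map (· - r)).sum := by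
  classical
  have hrank : (jordanMat k μ ^ r).rank =
      (diagonal fun i : Fin n => if μ.blockPos i + r < μ.blockSize i then (1 : k) else 0).rank :=
    le_antisymm
      (by conv_lhs => rw [← diagonal_mul_jordanMat_pow (k := k) μ r]
          exact rank_mul_le_left _ _)
      (by rw [← jordanMat_pow_mul_transpose]; exact rank_mul_le_left _ _)
  rw [hrank, rank_diagonal, Fintype.card_subtype, Finset.card_filter]
  simp only [ne_eq, ite_eq_right_iff, one_ne_zero, imp_false, not_not]
  rw [Fin.sum_univ_eq_sum_range (fun i => if μ.blockPos i + r < μ.blockSize i then 1 else 0),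
    sum_range_blockSize_blockPos μ fun s p => if p + r < s then 1 else 0]
  congr 1
  refine Multiset.map_congr rfl fun s _ => ?_
  rw [← Finset.card_filter, show (Finset.range s).filter (· + r < s) = Finset.range (s - r) by
    ext; simp only [Finset.mem_filter, Finset.mem_range]; omega, Finset.card_range]

end JordanMat

lemma eq_of_semiconjBy_jordanMat {k : Type} [Field k] {n : ℕ} {μ ν : Nat.Partition n}
    {u : Matrix (Fin n) (Fin n) k} (hu : IsUnit u.det)
    (h : SemiconjBy u (jordanMat k μ) (jordanMat k ν)) : μ = ν := by
  refine Nat.Partition.ext (Multiset.eq_of_forall_sum_map_tsub_eq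
    (fun h0 => (μ.parts_pos h0).false) (fun h0 => (ν.parts_pos h0).false) fun r => ?_)
  rw [← rank_jordanMat_pow (k := k), ← rank_jordanMat_pow (k := k),
    ← rank_mul_eq_right_of_isUnit_det u _ hu, (h.pow_right r).eq,
    rank_mul_eq_left_of_isUnit_det u _ hu]

section Centralizer

variable {k : Type} [Field k] {n : ℕ} {μ : Nat.Partition n} {u : Matrix (Fin n) (Fin n) k}

open Nat.Partition

lemma apply_eq_apply_pred_of_commute_jordanMat (hu : Commute u (jordanMat k μ)) (i j : Fin n)
    (hi : 0 < μ.blockPos i) :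
    u i j = if 0 < μ.blockPos j then
      u ⟨i - 1, (Nat.sub_le _ _).trans_lt i.isLt⟩ ⟨j - 1, (Nat.sub_le _ _).trans_lt j.isLt⟩
      else 0 := by
  have hle := μ.blockPos_le i
  have hlt := μ.blockPos_lt_blockSize i.isLt
  have hrel := congr_fun (congr_fun hu.eq.symm ⟨i - 1, (Nat.sub_le _ _).trans_lt i.isLt⟩) j
  rw [jordanMat_mul_apply, mul_jordanMat_apply, dif_pos (by
    rw [blockPos_sub (r := 1) hi, blockSize_sub (r := 1) hi]; omega)] at hrel
  simpa [Nat.sub_add_cancel (show 1 ≤ (i : ℕ) by omega)] using hrel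

lemma apply_eq_apply_succ_of_commute_jordanMat (hu : Commute u (jordanMat k μ)) (i j : Fin n)
    (hj : μ.blockPos j + 1 < μ.blockSize j) :
    u i j = if h : μ.blockPos i + 1 < μ.blockSize i then
      u ⟨i + 1, add_lt_of_blockPos_add_lt h⟩ ⟨j + 1, add_lt_of_blockPos_add_lt hj⟩
      else 0 := by
  have hrel := congr_fun (congr_fun hu.eq.symm i) ⟨j + 1, add_lt_of_blockPos_add_lt hj⟩
  rw [jordanMat_mul_apply, mul_jordanMat_apply, if_pos (by rw [blockPos_add hj]; omega)] at hrel
  simpa using hrel.symm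

lemma apply_eq_zero_of_blockPos_lt (hu : Commute u (jordanMat k μ)) (i j : Fin n)
    (h : μ.blockPos j < μ.blockPos i) : u i j = 0 := by
  obtain ⟨p, hp⟩ : ∃ p, μ.blockPos j = p := ⟨_, rfl⟩
  induction p generalizing i j with
  | zero => rw [apply_eq_apply_pred_of_commute_jordanMat hu i j (by omega), if_neg (by omega)]
  | succ p ih =>
    rw [apply_eq_apply_pred_of_commute_jordanMat hu i j (by omega), if_pos (by omega)]
    have hi := blockPos_sub (μ := μ) (i := i) (r := 1) (by omega)
    have hj := blockPos_sub (μ := μ) (i := j) (r := 1) (by omega)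
    apply ih <;> simp only [hi, hj] <;> omega

lemma apply_eq_zero_of_blockSize_lt (hu : Commute u (jordanMat k μ)) (i j : Fin n)
    (hp : μ.blockPos i = μ.blockPos j) (hs : μ.blockSize i < μ.blockSize j) : u i j = 0 := by
  obtain ⟨t, ht⟩ : ∃ t, μ.blockSize i - μ.blockPos i = t := ⟨_, rfl⟩
  have hi := μ.blockPos_lt_blockSize i.isLt
  induction t generalizing i j with
  | zero => omega
  | succ t ih =>
    rw [apply_eq_apply_succ_of_commute_jordanMat hu i j (by omega)]
    split_ifs with h
    · have hj : μ.blockPos j + 1 < μ.blockSize j := by omega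
      apply ih <;> simp only [blockPos_add h, blockSize_add h, blockPos_add hj,
        blockSize_add hj] <;> omega
    · rfl

lemma blockTriangular_of_commute_jordanMat (hu : Commute u (jordanMat k μ)) :
    u.BlockTriangular μ.blockKey := by
  intro i j h
  rcases Prod.Lex.toLex_lt_toLex.mp h with h | ⟨hp, hs⟩
  · exact apply_eq_zero_of_blockPos_lt hu i j h
  · exact apply_eq_zero_of_blockSize_lt hu i j hp.symm hs

lemma det_toSquareBlock_blockKey_succ (hu : Commute u (jordanMat k μ)) {p s : ℕ}
    (hps : p + 1 < s) :
    (u.toSquareBlock μ.blockKey (toLex (p + 1, OrderDual.toDual s))).det =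
      (u.toSquareBlock μ.blockKey (toLex (p, OrderDual.toDual s))).det := by
  let shift : {i // μ.blockKey i = toLex (p, OrderDual.toDual s)} ≃
      {i // μ.blockKey i = toLex (p + 1, OrderDual.toDual s)} :=
    { toFun i :=
        have hi := μ.blockKey_eq_toLex_iff.mp i.2
        have hi' : μ.blockPos i + 1 < μ.blockSize i := by omega
        ⟨⟨i.1 + 1, add_lt_of_blockPos_add_lt hi'⟩, μ.blockKey_eq_toLex_iff.mpr
          ⟨(blockPos_add hi').trans (by omega), (blockSize_add hi').trans hi.2⟩⟩
      invFun i :=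
        have hi := μ.blockKey_eq_toLex_iff.mp i.2
        have hi' : 1 ≤ μ.blockPos i := by omega
        ⟨⟨i.1 - 1, (Nat.sub_le _ _).trans_lt i.1.isLt⟩, μ.blockKey_eq_toLex_iff.mpr
          ⟨(blockPos_sub hi').trans (by omega), (blockSize_sub hi').trans hi.2⟩⟩
      left_inv i := by ext; simp
      right_inv i := by
        have := (μ.blockKey_eq_toLex_iff.mp i.2).1 ▸ μ.blockPos_le i
        ext; simp only; omega }
  rw [← det_submatrix_equiv_self shift.symm]
  congr 1
  ext i j
  have hi := (μ.blockKey_eq_toLex_iff.mp i.2).1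
  have hj := (μ.blockKey_eq_toLex_iff.mp j.2).1
  change u i j = u (shift.symm i) (shift.symm j)
  rw [apply_eq_apply_pred_of_commute_jordanMat hu i j (by omega), if_pos (by omega)]
  rfl

lemma exists_det_eq_pow_gcd_of_commute_jordanMat (hu : Commute u (jordanMat k μ)) :
    ∃ c : k, u.det = c ^ μ.parts.gcd := by
  classical
  set B := fun s : ℕ => (u.toSquareBlock μ.blockKey (toLex (0, OrderDual.toDual s))).det
  have hB (p s : ℕ) (hps : p < s) :
      (u.toSquareBlock μ.blockKey (toLex (p, OrderDual.toDual s))).det = B s := by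
    induction p with
    | zero => rfl
    | succ p ih => rw [det_toSquareBlock_blockKey_succ hu hps, ih (by omega)]
  refine ⟨∏ s ∈ μ.parts.toFinset, B s ^ (s / μ.parts.gcd), ?_⟩
  rw [(blockTriangular_of_commute_jordanMat hu).det, image_blockKey, Finset.prod_image
    (fun x _ y _ h => by simpa [Sigma.ext_iff, and_comm] using h), Finset.prod_sigma,
    ← Finset.prod_pow]
  refine Finset.prod_congr rfl fun s hs => ?_
  rw [Finset.prod_congr rfl fun p hp => hB p s (Finset.mem_range.mp hp), Finset.prod_const,
    Finset.card_range, ← pow_mul,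
    Nat.div_mul_cancel (Multiset.gcd_dvd (Multiset.mem_toFinset.mp hs))]

lemma exists_commute_jordanMat_det_eq {b : k} (hb : b ≠ 0) :
    ∃ z : Matrix (Fin n) (Fin n) k, Commute z (jordanMat k μ) ∧ z.det = b ^ μ.parts.gcd := by
  obtain ⟨W, hW⟩ := μ.exists_sum_weight_blockStart_eq_gcd
  refine ⟨diagonal fun i => b ^ W (i - μ.blockPos i), ?_, ?_⟩
  · ext i j
    rw [diagonal_mul, mul_diagonal, jordanMat_apply]
    split_ifs with h
    · obtain ⟨hj, hij⟩ := h
      have := μ.blockPos_le i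
      rw [mul_one, one_mul, hj, blockPos_add hij]
      congr 2
      omega
    · rw [mul_zero, zero_mul]
  · rw [det_diagonal, Finset.prod_zpow_eq_zpow_sum hb,
      Fin.sum_univ_eq_sum_range (fun i => W (i - μ.blockPos i)), hW, zpow_natCast]

end Centralizer

section Dmat

variable {k : Type} [Field k] {n : ℕ}

lemma det_Dmat (hn : n ≠ 0) (d : k) : (Dmat k n d).det = d := by
  rw [Dmat, det_diagonal, Finset.prod_eq_single ⟨n - 1, by omega⟩ (fun i _ hi => if_neg
    (Fin.val_ne_iff.mpr hi)) (by simp)]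
  simp

lemma isUnit_det_Dmat {d : k} (hd : d ≠ 0) : IsUnit (Dmat k n d).det := by
  rw [Dmat, det_diagonal]
  exact (Finset.prod_ne_zero_iff.mpr fun i _ => by split_ifs <;> simp [hd]).isUnit

lemma Dmat_mul_jordanMat (μ : Nat.Partition n) (d : k) :
    Dmat k n d * jordanMat k μ = jordanMat k μ := by
  ext i j
  rw [Dmat, diagonal_mul]
  split_ifs with hi
  · rw [jordanMat_apply, if_neg (by omega), mul_zero]
  · rw [one_mul]

lemma jordanMat_mul_Dmat_eq_inv_mul_mul (μ : Nat.Partition n) {d : k} (hd : d ≠ 0) :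
    jordanMat k μ * Dmat k n d = (Dmat k n d)⁻¹ * jordanMat k μ * Dmat k n d := by
  conv_rhs => rw [← Dmat_mul_jordanMat μ d, ← mul_assoc,
    nonsing_inv_mul _ (isUnit_det_Dmat hd), one_mul]

end Dmat

theorem stmt5_general (k : Type) [Field k] (n : ℕ) (hn : 2 ≤ n)
    (μ ν : Nat.Partition n) (d d' : k) (hd : d ≠ 0) (hd' : d' ≠ 0) :
    SLConj k (jordanMat k μ * Dmat k n d) (jordanMat k ν * Dmat k n d') ↔
      (μ = ν ∧ ∃ c : k, c ≠ 0 ∧ d * d'⁻¹ = c ^ μ.parts.gcd) := by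
  rw [jordanMat_mul_Dmat_eq_inv_mul_mul μ hd, jordanMat_mul_Dmat_eq_inv_mul_mul ν hd',
    slConj_inv_mul_mul_iff (isUnit_det_Dmat hd) (isUnit_det_Dmat hd'),
    det_Dmat (by omega), det_Dmat (by omega)]
  have hm := μ.gcd_parts_ne_zero (by omega)
  constructor
  · rintro ⟨u, hu, hconj⟩
    obtain rfl := eq_of_semiconjBy_jordanMat (hu ▸ (div_ne_zero hd' hd).isUnit) hconj
    obtain ⟨c, hc⟩ := exists_det_eq_pow_gcd_of_commute_jordanMat hconj
    have hc0 : c ≠ 0 := by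
      rintro rfl
      rw [hu, zero_pow hm] at hc
      exact div_ne_zero hd' hd hc
    refine ⟨rfl, c⁻¹, inv_ne_zero hc0, ?_⟩
    rw [inv_pow, ← hc, hu, inv_div, div_eq_mul_inv]
  · rintro ⟨rfl, c, hc, hcd⟩
    obtain ⟨z, hz, hzdet⟩ := exists_commute_jordanMat_det_eq (μ := μ) (inv_ne_zero hc)
    refine ⟨z, ?_, hz⟩
    rw [hzdet, inv_pow, ← hcd, mul_inv, inv_inv, div_eq_mul_inv, mul_comm]

/-- Over a field of characteristic zero, `J_μ D(d)` and `J_ν D(d')` are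
`SL_n(k)`-conjugate iff `μ = ν` and `d·d'⁻¹` is an `m`-th power, `m = gcd(μ)`. -/
theorem stmt5 (k : Type) [Field k] [CharZero k] (n : ℕ) (hn : 2 ≤ n)
    (μ ν : Nat.Partition n) (d d' : k) (hd : d ≠ 0) (hd' : d' ≠ 0) :
    SLConj k (jordanMat k μ * Dmat k n d) (jordanMat k ν * Dmat k n d') ↔
      (μ = ν ∧ ∃ c : k, c ≠ 0 ∧ d * d'⁻¹ = c ^ μ.parts.gcd) :=
  stmt5_general k n hn μ ν d d' hd hd'
end

section
/- Let k be a field of characteristic zero, N, m ≥ 1, and Q ∈ M_m(k) an invertible symmetric matrix. Set A = J_N ⊗ I_m ∈ M_{Nm}(k) (Kronecker product of the N×N Jordan block with the m×m identity), let S ∈ M_{Nm}(k) be the block-diagonal matrix diag(0_{(N−1)m}, (−1)^N Q) (an (N−1)m×(N−1)m zero block followed by (−1)^N Q), and let X = [[A, S],[0, −A^T]] ∈ M_{2Nm}(k). Then: (1) X ∈ sp_{2Nm}(k); (2) X is nilpotent with Jordan type consisting of exactly m parts all equal to 2N, i.e., rank(X^i) = (2N − i)·m for 0 ≤ i ≤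 2N; and (3) for the standard symplectic pairing ⟨x, y⟩ = x^T J y on k^{2Nm}, the m×m matrix with (a, b) entry ⟨e_{Nm+a}, X^{2N−1} e_{Nm+b}⟩ (1 ≤ a, b ≤ m, where e_i is the i-th standard basis vector) equals Q. -/
open Matrix

/-- `J_N ⊗ I_m`: the Kronecker product of the `N × N` Jordan block with the `m × m`
identity, on the index set `Fin N × Fin m` (row-major flattening `(a, b) ↦ a·m + b`). -/
def kronJordan (k : Type) [Field k] (N m : ℕ) :
    Matrix (Fin N × Fin m) (Fin N × Fin m) k :=
  fun p q => if (q.1 : ℕ) = (p.1 : ℕ) + 1 ∧ p.2 = q.2 then 1 else 0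

/-- The block-diagonal matrix `diag(0_{(N-1)m}, (-1)^N Q)`. -/
def cornerBlock (k : Type) [Field k] (N m : ℕ) (Q : Matrix (Fin m) (Fin m) k) :
    Matrix (Fin N × Fin m) (Fin N × Fin m) k :=
  fun p q =>
    if (p.1 : ℕ) = N - 1 ∧ (q.1 : ℕ) = N - 1 then (-1 : k) ^ N * Q p.2 q.2 else 0

/-- The standard symplectic matrix `[[0, I], [-I, 0]]` on an index set `ι ⊕ ι`. -/
def sympJblocks (k : Type) [Field k] (ι : Type) [Fintype ι] [DecidableEq ι] :
    Matrix (ι ⊕ ι) (ι ⊕ ι) k :=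
  Matrix.fromBlocks 0 1 (-1) 0

open scoped Kronecker

/-!
The standard basis vectors `e_{p,a}` (first summand) and `f_{p,a}` (second summand) of `k^{2Nm}`
form, under `X`, `m` Jordan chains of length `2N`:
`f_{0,b} ↦ -f_{1,b} ↦ ⋯ ↦ ±f_{N-1,b} ↦ -∑ₐ Q a b • e_{N-1,a} ↦ ⋯ ↦ -∑ₐ Q a b • e_{0,a} ↦ 0`.
The matrix `chainMatrix` of these chain vectors is invertible because `Q` is, and it conjugates
`X` into `J_{2N} ⊗ I_m` once the second summand is listed backwards (`foldEquiv`). Nilpotency and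
the ranks of the powers of `X` are therefore those of `J_{2N}^i ⊗ I_m`, and the pairing is read
off from the end `-∑ₐ Q a b • e_{0,a}` of the chain that starts at `f_{0,b}`.
-/

theorem Fin.sum_ite_val_eq {M : Type*} [AddCommMonoid M] {n : ℕ} (c : ℕ) (f : Fin n → M) :
    ∑ r : Fin n, (if (r : ℕ) = c then f r else 0) = if h : c < n then f ⟨c, h⟩ else 0 := by
  split_ifs with h
  · simp [← Fin.ext_iff (b := ⟨c, h⟩)]
  · exact Finset.sum_eq_zero fun r _ => if_neg (by omega)

namespace Matrix

theorem rank_eq_rank_mul_transpose_of_mul_transpose_mul_self {ι κ R : Type*} [Fintype ι]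
    [Fintype κ] [CommSemiring R] [StrongRankCondition R] {M : Matrix ι κ R}
    (h : M * Mᵀ * M = M) : M.rank = (M * Mᵀ).rank := by
  refine le_antisymm ?_ (rank_mul_le_left _ _)
  conv_lhs => rw [← h]
  exact rank_mul_le_left _ _

theorem kronecker_one_pow {ι κ R : Type*} [Fintype ι] [DecidableEq ι] [Fintype κ]
    [DecidableEq κ] [CommSemiring R] (A : Matrix ι ι R) (i : ℕ) :
    (A ⊗ₖ (1 : Matrix κ κ R)) ^ i = (A ^ i) ⊗ₖ 1 := by
  induction i with
  | zero => rw [pow_zero, pow_zero, one_kronecker_one]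
  | succ i ih => rw [pow_succ, ih, ← mul_kronecker_mul, Matrix.one_mul, pow_succ]

theorem reindex_pow {ι κ R : Type*} [Fintype ι] [DecidableEq ι] [Fintype κ] [DecidableEq κ]
    [CommSemiring R] (e : ι ≃ κ) (M : Matrix ι ι R) (i : ℕ) :
    reindex e e (M ^ i) = reindex e e M ^ i := by
  simpa only [coe_reindexAlgEquiv] using map_pow (reindexAlgEquiv R R e) M i

end Matrix

def jordanBlock (R : Type*) [Zero R] [One R] (n : ℕ) : Matrix (Fin n) (Fin n) R :=
  of fun p q => if (q : ℕ) = p + 1 then 1 else 0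

def cornerUnit (R : Type*) [Zero R] [One R] (n : ℕ) : Matrix (Fin n) (Fin n) R :=
  of fun p q => if (p : ℕ) = n - 1 ∧ (q : ℕ) = n - 1 then 1 else 0

def signDiagonal (R : Type*) [Ring R] (n : ℕ) : Matrix (Fin n) (Fin n) R :=
  diagonal fun p => (-1) ^ (p : ℕ)

section JordanBlock

variable {R : Type*} {n : ℕ}

theorem jordanBlock_pow_apply [Semiring R] (i : ℕ) (p q : Fin n) :
    (jordanBlock R n ^ i) p q = if (q : ℕ) = p + i then 1 else 0 := by
  induction i generalizing p with
  | zero => simp [one_apply, Fin.ext_iff, eq_comm]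
  | succ i ih =>
    simp only [pow_succ', mul_apply, ih]
    simp only [jordanBlock, of_apply, ite_mul, one_mul, zero_mul, Fin.sum_ite_val_eq]
    have := q.isLt
    split_ifs <;> first | rfl | omega

theorem jordanBlock_pow_eq_zero [Semiring R] {i : ℕ} (h : n ≤ i) : jordanBlock R n ^ i = 0 := by
  ext p q
  simp only [jordanBlock_pow_apply, Matrix.zero_apply]
  exact if_neg (by omega)

theorem jordanBlock_pow_mul_transpose [Semiring R] (i : ℕ) :
    jordanBlock R n ^ i * (jordanBlock R n ^ i)ᵀ =
      diagonal fun p : Fin n => if (p : ℕ) + i < n then 1 else 0 := by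
  ext p q
  simp only [mul_apply, transpose_apply, jordanBlock_pow_apply, diagonal_apply, ite_mul, one_mul,
    zero_mul, Fin.sum_ite_val_eq]
  split_ifs <;> first | rfl | omega

theorem jordanBlock_pow_mul_transpose_mul [Semiring R] (i : ℕ) :
    jordanBlock R n ^ i * (jordanBlock R n ^ i)ᵀ * jordanBlock R n ^ i = jordanBlock R n ^ i := by
  ext p q
  rw [jordanBlock_pow_mul_transpose, diagonal_mul, jordanBlock_pow_apply]
  split_ifs <;> first | rfl | omega | simp

theorem rank_jordanBlock_pow_kronecker_one {k : Type*} [Field k] (n m i : ℕ) :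
    ((jordanBlock k n ^ i) ⊗ₖ (1 : Matrix (Fin m) (Fin m) k)).rank = (n - i) * m := by
  classical
  set P := jordanBlock k n ^ i
  have hPPt : (P ⊗ₖ (1 : Matrix (Fin m) (Fin m) k)) * (P ⊗ₖ 1)ᵀ =
      diagonal fun x : Fin n × Fin m => if (x.1 : ℕ) + i < n then 1 else 0 := by
    rw [← kroneckerMap_transpose, ← mul_kronecker_mul, transpose_one, Matrix.one_mul,
      jordanBlock_pow_mul_transpose, ← diagonal_one, diagonal_kronecker_diagonal]
    simp only [mul_one]
  have hPPtP : (P ⊗ₖ (1 : Matrix (Fin m) (Fin m) k)) * (P ⊗ₖ 1)ᵀ * (P ⊗ₖ 1) = P ⊗ₖ 1 := by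
    rw [← kroneckerMap_transpose, ← mul_kronecker_mul, ← mul_kronecker_mul, transpose_one,
      Matrix.one_mul, Matrix.one_mul, jordanBlock_pow_mul_transpose_mul]
  rw [rank_eq_rank_mul_transpose_of_mul_transpose_mul_self hPPtP, hPPt, rank_diagonal]
  simp only [ne_eq, ite_eq_right_iff, one_ne_zero, imp_false, not_not]
  rw [Fintype.card_congr (Equiv.prodSubtypeFstEquivSubtypeProd (β := Fin m)
    (p := fun a : Fin n => (a : ℕ) + i < n)), Fintype.card_prod, Fintype.card_fin,
    Fintype.card_subtype]
  simp only [← Nat.lt_sub_iff_add_lt, Fin.card_filter_val_lt]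
  rw [min_eq_right (Nat.sub_le n i)]

theorem neg_transpose_jordanBlock_mul_signDiagonal [Ring R] :
    -(jordanBlock R n)ᵀ * signDiagonal R n = signDiagonal R n * (jordanBlock R n)ᵀ := by
  ext p q
  simp only [signDiagonal, mul_diagonal, diagonal_mul, Matrix.neg_apply, transpose_apply,
    jordanBlock, of_apply]
  split_ifs with h
  · simp [h, pow_succ]
  · simp

theorem cornerUnit_mul_signDiagonal [Ring R] :
    cornerUnit R n * signDiagonal R n = (-1 : R) ^ (n - 1) • cornerUnit R n := by
  ext p q
  simp only [signDiagonal, cornerUnit, mul_diagonal, of_apply, Matrix.smul_apply, smul_eq_mul]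
  split_ifs with h
  · rw [h.2]
    simp
  · simp

end JordanBlock

section KroneckerForm

variable (k : Type) [Field k] (N m : ℕ)

theorem kronJordan_eq_kronecker : kronJordan k N m = jordanBlock k N ⊗ₖ 1 := by
  ext p q
  simp only [kronJordan, jordanBlock, kroneckerMap_apply, of_apply, one_apply]
  split_ifs <;> simp_all

theorem neg_transpose_kronJordan_eq_kronecker :
    -(kronJordan k N m)ᵀ = (-(jordanBlock k N)ᵀ) ⊗ₖ 1 := by
  rw [kronJordan_eq_kronecker, ← kroneckerMap_transpose, transpose_one]
  ext p q
  simp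

theorem cornerBlock_eq_kronecker (Q : Matrix (Fin m) (Fin m) k) :
    cornerBlock k N m Q = cornerUnit k N ⊗ₖ ((-1 : k) ^ N • Q) := by
  ext p q
  simp [cornerBlock, cornerUnit]

theorem cornerBlock_transpose {Q : Matrix (Fin m) (Fin m) k} (hQ : Q.IsSymm) :
    (cornerBlock k N m Q)ᵀ = cornerBlock k N m Q := by
  ext p q
  simp only [transpose_apply, cornerBlock, hQ.apply, and_comm]

end KroneckerForm

def foldEquiv (N m : ℕ) : (Fin N × Fin m) ⊕ (Fin N × Fin m) ≃ Fin (2 * N) × Fin m :=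
  (Equiv.sumProdDistrib _ _ _).symm.trans <| Equiv.prodCongr
    ((Equiv.sumCongr (Equiv.refl _) Fin.revPerm).trans <|
      finSumFinEquiv.trans <| finCongr (two_mul N).symm) (Equiv.refl _)

@[simp] theorem foldEquiv_inl {N m : ℕ} (p : Fin N × Fin m) :
    foldEquiv N m (.inl p) = (⟨p.1, by omega⟩, p.2) := by
  ext <;> simp [foldEquiv]

@[simp] theorem foldEquiv_inr {N m : ℕ} (p : Fin N × Fin m) :
    foldEquiv N m (.inr p) = (⟨2 * N - 1 - p.1, by omega⟩, p.2) := by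
  ext <;> simp [foldEquiv]
  omega

theorem reindex_kronJordan_foldEquiv (k : Type) [Field k] (N m : ℕ) :
    reindex (foldEquiv N m).symm (foldEquiv N m).symm (kronJordan k (2 * N) m) =
      fromBlocks (kronJordan k N m) (cornerUnit k N ⊗ₖ 1) 0 (kronJordan k N m)ᵀ := by
  ext (⟨p, a⟩ | ⟨p, a⟩) (⟨q, b⟩ | ⟨q, b⟩) <;>
    simp only [reindex_apply, Equiv.symm_symm, submatrix_apply, kronJordan, cornerUnit,
      kroneckerMap_apply, one_apply, of_apply, fromBlocks_apply₁₁, fromBlocks_apply₁₂,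
      fromBlocks_apply₂₁, fromBlocks_apply₂₂, transpose_apply, Matrix.zero_apply, foldEquiv_inl,
      foldEquiv_inr] <;>
    have := p.isLt <;> have := q.isLt <;> split_ifs <;> first | rfl | omega | simp_all

def chainMatrix (k : Type) [Field k] (N m : ℕ) (Q : Matrix (Fin m) (Fin m) k) :
    Matrix ((Fin N × Fin m) ⊕ (Fin N × Fin m)) ((Fin N × Fin m) ⊕ (Fin N × Fin m)) k :=
  fromBlocks (-(1 ⊗ₖ Q)) 0 0 (signDiagonal k N ⊗ₖ 1)

theorem isUnit_det_chainMatrix (k : Type) [Field k] (N m : ℕ) {Q : Matrix (Fin m) (Fin m) k}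
    (hQ : IsUnit Q) : IsUnit (chainMatrix k N m Q).det := by
  rw [chainMatrix, det_fromBlocks_zero₂₁, det_neg, det_kronecker, det_kronecker, signDiagonal,
    det_diagonal, det_one, det_one]
  have hQdet := (isUnit_iff_isUnit_det Q).1 hQ
  simp [isUnit_iff_ne_zero, hQdet.ne_zero, Finset.prod_ne_zero_iff]

section ChainMatrix

variable (k : Type) [Field k] {N : ℕ} (m : ℕ)

theorem fromBlocks_mul_chainMatrix (hN : 1 ≤ N) (Q : Matrix (Fin m) (Fin m) k) :
    fromBlocks (kronJordan k N m) (cornerBlock k N m Q) 0 (-(kronJordan k N m)ᵀ) *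
        chainMatrix k N m Q =
      chainMatrix k N m Q *
        reindex (foldEquiv N m).symm (foldEquiv N m).symm (kronJordan k (2 * N) m) := by
  rw [reindex_kronJordan_foldEquiv, chainMatrix, fromBlocks_multiply, fromBlocks_multiply,
    neg_transpose_kronJordan_eq_kronecker, cornerBlock_eq_kronecker, kronJordan_eq_kronecker,
    ← kroneckerMap_transpose, transpose_one]
  simp only [Matrix.mul_zero, Matrix.zero_mul, add_zero, zero_add]
  congr 1
  · rw [Matrix.mul_neg, Matrix.neg_mul, ← mul_kronecker_mul, ← mul_kronecker_mul, Matrix.mul_one,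
      Matrix.one_mul, Matrix.mul_one, Matrix.one_mul]
  · rw [← mul_kronecker_mul, Matrix.neg_mul, ← mul_kronecker_mul, cornerUnit_mul_signDiagonal,
      Matrix.mul_one, Matrix.one_mul, Matrix.mul_one, smul_kronecker, kronecker_smul, smul_smul,
      ← pow_add, show N - 1 + N = 2 * (N - 1) + 1 by omega, pow_succ, pow_mul]
    simp
  · rw [← mul_kronecker_mul, ← mul_kronecker_mul, neg_transpose_jordanBlock_mul_signDiagonal]

theorem chainMatrix_mulVec_single_inr_zero (hN : 1 ≤ N) (Q : Matrix (Fin m) (Fin m) k)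
    (b : Fin m) :
    chainMatrix k N m Q *ᵥ Pi.single (Sum.inr (⟨0, hN⟩, b)) 1 =
      Pi.single (Sum.inr (⟨0, hN⟩, b)) 1 := by
  ext (⟨p, a⟩ | ⟨p, a⟩) <;>
    simp [chainMatrix, signDiagonal, Pi.single_apply, diagonal_apply, one_apply, Fin.ext_iff]
  split_ifs <;> simp_all

theorem reindex_kronJordan_pow_mulVec_single (hN : 1 ≤ N) (b : Fin m) :
    reindex (foldEquiv N m).symm (foldEquiv N m).symm (kronJordan k (2 * N) m ^ (2 * N - 1)) *ᵥ
      Pi.single (Sum.inr (⟨0, hN⟩, b)) 1 = Pi.single (Sum.inl (⟨0, hN⟩, b)) 1 := by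
  rw [kronJordan_eq_kronecker, kronecker_one_pow, mulVec_single_one]
  ext (⟨p, a⟩ | ⟨p, a⟩) <;>
    simp [jordanBlock_pow_apply, one_apply, Pi.single_apply, Fin.ext_iff]
  · split_ifs <;> simp_all
  · omega

end ChainMatrix

theorem transpose_mul_sympJblocks_add_sympJblocks_mul_fromBlocks (k : Type) [Field k] {ι : Type}
    [Fintype ι] [DecidableEq ι] (A S : Matrix ι ι k) (hS : Sᵀ = S) :
    (fromBlocks A S 0 (-Aᵀ))ᵀ * sympJblocks k ι + sympJblocks k ι * fromBlocks A S 0 (-Aᵀ) = 0 := by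
  simp only [sympJblocks, fromBlocks_transpose, fromBlocks_multiply, fromBlocks_add, hS,
    transpose_neg, transpose_transpose, transpose_zero, Matrix.mul_zero, Matrix.zero_mul,
    Matrix.mul_one, Matrix.one_mul, Matrix.mul_neg, Matrix.neg_mul, add_zero, zero_add, neg_neg,
    add_neg_cancel, neg_zero, fromBlocks_zero]

theorem stmt12_general (k : Type) [Field k] (N m : ℕ) (hN : 1 ≤ N)
    (Q : Matrix (Fin m) (Fin m) k) (hQsymm : Q.IsSymm) (hQunit : IsUnit Q) :
    letI X : Matrix ((Fin N × Fin m) ⊕ (Fin N × Fin m))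
        ((Fin N × Fin m) ⊕ (Fin N × Fin m)) k :=
      Matrix.fromBlocks (kronJordan k N m) (cornerBlock k N m Q) 0 (-(kronJordan k N m)ᵀ)
    letI J := sympJblocks k (Fin N × Fin m)
    -- (1) X lies in the symplectic Lie algebra
    (Xᵀ * J + J * X = 0) ∧
    -- (2) X is nilpotent, with Jordan type consisting of m parts all equal to 2N
    IsNilpotent X ∧ (∀ i : ℕ, i ≤ 2 * N → (X ^ i).rank = (2 * N - i) * m) ∧
    -- (3) the pairing ⟨e_{Nm+a}, X^{2N-1} e_{Nm+b}⟩ recovers Q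
    (∀ a b : Fin m,
      (Pi.single (Sum.inr ((⟨0, hN⟩ : Fin N), a)) (1 : k)) ⬝ᵥ
          (J.mulVec ((X ^ (2 * N - 1)).mulVec
            (Pi.single (Sum.inr ((⟨0, hN⟩ : Fin N), b)) (1 : k)))) = Q a b) := by
  set X := fromBlocks (kronJordan k N m) (cornerBlock k N m Q) 0 (-(kronJordan k N m)ᵀ)
  set C := chainMatrix k N m Q
  set e := foldEquiv N m
  have hC : IsUnit C.det := isUnit_det_chainMatrix k N m hQunit
  have hpow (i : ℕ) : X ^ i * C = C * reindex e.symm e.symm (kronJordan k (2 * N) m ^ i) := by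
    rw [reindex_pow]
    exact (SemiconjBy.pow_right (fromBlocks_mul_chainMatrix k m hN Q).symm i).symm
  refine ⟨transpose_mul_sympJblocks_add_sympJblocks_mul_fromBlocks k _ _
    (cornerBlock_transpose k N m hQsymm), ⟨2 * N, ?_⟩, fun i _ => ?_, fun a b => ?_⟩
  · have h := hpow (2 * N)
    rw [kronJordan_eq_kronecker, kronecker_one_pow, jordanBlock_pow_eq_zero le_rfl,
      zero_kronecker, reindex_apply, Matrix.submatrix_zero, Pi.zero_apply, Pi.zero_apply,
      Matrix.mul_zero] at h
    exact ((isUnit_iff_isUnit_det C).2 hC).mul_left_eq_zero.1 h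
  · rw [← rank_mul_eq_left_of_isUnit_det C _ hC, hpow, rank_mul_eq_right_of_isUnit_det C _ hC,
      rank_reindex, kronJordan_eq_kronecker, kronecker_one_pow, rank_jordanBlock_pow_kronecker_one]
  · rw [← chainMatrix_mulVec_single_inr_zero k m hN Q b, mulVec_mulVec _ (X ^ _), hpow,
      ← mulVec_mulVec, reindex_kronJordan_pow_mulVec_single, mulVec_mulVec, single_dotProduct,
      one_mul, mulVec_single_one]
    simp [C, sympJblocks, chainMatrix, fromBlocks_multiply]

/-- The matrix `X = [[A, S], [0, -Aᵀ]]` with `A = J_N ⊗ I_m` and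
`S = diag(0, (-1)^N Q)`: it lies in `sp`, is nilpotent of Jordan type `(2N)^m`, and the
induced form on the lowest weight space is `Q`. -/
theorem stmt12 (k : Type) [Field k] [CharZero k] (N m : ℕ) (hN : 1 ≤ N) (hm : 1 ≤ m)
    (Q : Matrix (Fin m) (Fin m) k) (hQsymm : Q.IsSymm) (hQunit : IsUnit Q) :
    letI X : Matrix ((Fin N × Fin m) ⊕ (Fin N × Fin m))
        ((Fin N × Fin m) ⊕ (Fin N × Fin m)) k :=
      Matrix.fromBlocks (kronJordan k N m) (cornerBlock k N m Q) 0 (-(kronJordan k N m)ᵀ)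
    letI J := sympJblocks k (Fin N × Fin m)
    -- (1) X lies in the symplectic Lie algebra
    (Xᵀ * J + J * X = 0) ∧
    -- (2) X is nilpotent, with Jordan type consisting of m parts all equal to 2N
    IsNilpotent X ∧ (∀ i : ℕ, i ≤ 2 * N → (X ^ i).rank = (2 * N - i) * m) ∧
    -- (3) the pairing ⟨e_{Nm+a}, X^{2N-1} e_{Nm+b}⟩ recovers Q
    (∀ a b : Fin m,
      (Pi.single (Sum.inr ((⟨0, hN⟩ : Fin N), a)) (1 : k)) ⬝ᵥ
          (J.mulVec ((X ^ (2 * N - 1)).mulVec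
            (Pi.single (Sum.inr ((⟨0, hN⟩ : Fin N), b)) (1 : k)))) = Q a b) :=
  stmt12_general k N m hN Q hQsymm hQunit
end

section
/- Let n > N ≥ 1 be integers, let r be an irrational real number, let j : {1, …, N} → {1, …, n} be a function with j(i) ≠ i for all i, and let n_1, …, n_N be integers. Suppose there exists x ∈ ℝ^n satisfying x_i − x_{j(i)} = r − n_i for all 1 ≤ i ≤ N and x_1 + x_2 + ⋯ + x_n = 0. Then the N + 1 linear functionals on ℝ^n given by x ↦ x_i − x_{j(i)} (1 ≤ i ≤ N) and x ↦ Σ_{k=1}^n x_k are linearly independent; equivalently, the set of all solutions of the system is an affine subspace of ℝ^n of dimension exactly n − 1 − N. -/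
/-!
A `ℚ`-linear map `φ : ℝ → ℚ` vanishing on `ℚ` with `φ r = 1` turns a solution `x` into a
potential `u = φ ∘ x` with `u (x_i) = u (x_{j(i)}) + 1`. A linear relation among the
functionals `e_i - e_{j(i)}` then has zero coefficient at the index of largest potential in its
support (evaluate at `e_i`), so they are independent; the sum functional is not in their span,
as it does not vanish at `(1, …, 1)`.
-/

open Finset

theorem Irrational.exists_ratLinearMap_eq_one {r : ℝ} (hr : Irrational r) :
    ∃ φ : ℝ →ₗ[ℚ] ℚ, (∀ q : ℚ, φ q = 0) ∧ φ r = 1 := by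
  have hr' : r ∉ Submodule.span ℚ {(1 : ℝ)} := by
    rintro hq
    obtain ⟨q, rfl⟩ := Submodule.mem_span_singleton.1 hq
    exact hr ⟨q, by simp [Rat.smul_def]⟩
  obtain ⟨f, hfr, hf1⟩ := Submodule.exists_dual_map_eq_bot_of_notMem hr' inferInstance
  refine ⟨(f r)⁻¹ • f, fun q => ?_, by simp [hfr]⟩
  have : f q ∈ (Submodule.span ℚ {(1 : ℝ)}).map f :=
    Submodule.mem_map_of_mem (Submodule.mem_span_singleton.2 ⟨q, by simp [Rat.smul_def]⟩)
  simp_all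

theorem linearIndependent_proj_sub_proj {K ι κ α : Type*} [CommRing K] [DecidableEq κ]
    [LinearOrder α] {F j : ι → κ} (hF : F.Injective) (u : κ → α)
    (hu : ∀ i, u (j i) < u (F i)) :
    LinearIndependent K fun i =>
      (LinearMap.proj (F i) : (κ → K) →ₗ[K] K) - LinearMap.proj (j i) := by
  classical
  rw [linearIndependent_iff']
  intro s g hg
  by_contra! hne
  obtain ⟨i, hi, hgi⟩ := hne
  obtain ⟨i₀, hi₀, hmax⟩ :=
    (s.filter (g · ≠ 0)).exists_max_image (u ∘ F) ⟨i, mem_filter.2 ⟨hi, hgi⟩⟩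
  rw [mem_filter] at hi₀
  -- At `e_{F i₀}` only `i₀` contributes: an `i` with `j i = F i₀` has `u (F i) > u (F i₀)`,
  -- so `g i = 0` by maximality.
  have := LinearMap.congr_fun hg (Pi.single (F i₀) 1)
  rw [LinearMap.sum_apply, sum_eq_single_of_mem i₀ hi₀.1] at this
  · have hj₀ : j i₀ ≠ F i₀ := fun h => (hu i₀).ne (congrArg u h)
    simp [hj₀] at this
    exact hi₀.2 this
  intro i hi hii₀
  by_cases hgi : g i = 0
  · simp [hgi]
  have : j i ≠ F i₀ := fun h =>
    (hmax i (mem_filter.2 ⟨hi, hgi⟩)).not_gt (show u (F i₀) < u (F i) from h ▸ hu i)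
  simp [hF.ne hii₀, this]

theorem notMem_span_of_apply_ne_zero {R M ι : Type*} [CommRing R] [AddCommGroup M] [Module R M]
    {v : ι → M →ₗ[R] R} {f : M →ₗ[R] R} {x : M} (hv : ∀ i, v i x = 0) (hf : f x ≠ 0) :
    f ∉ Submodule.span R (Set.range v) := by
  have : Submodule.span R (Set.range v) ≤ LinearMap.ker (LinearMap.applyₗ x) :=
    Submodule.span_le.2 (Set.range_subset_iff.2 hv)
  exact fun h => hf (this h)

theorem stmt15_general (n N : ℕ) (hNn : N < n)
    (r : ℝ) (hr : Irrational r)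
    (j : Fin N → Fin n)
    (c : Fin N → ℤ)
    (hsol : ∃ x : Fin n → ℝ,
      (∀ i : Fin N, x (Fin.castLE hNn.le i) - x (j i) = r - (c i : ℝ)) ∧
      (∑ t : Fin n, x t) = 0) :
    LinearIndependent ℝ (fun o : Option (Fin N) =>
      o.elim (∑ t : Fin n, (LinearMap.proj t : (Fin n → ℝ) →ₗ[ℝ] ℝ))
        (fun i => (LinearMap.proj (Fin.castLE hNn.le i) : (Fin n → ℝ) →ₗ[ℝ] ℝ) -
          LinearMap.proj (j i))) := by
  obtain ⟨x, hx, -⟩ := hsol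
  obtain ⟨φ, hφ, hφr⟩ := hr.exists_ratLinearMap_eq_one
  have hu : ∀ i, φ (x (j i)) < φ (x (Fin.castLE hNn.le i)) := fun i => by
    have := congrArg φ (hx i)
    rw [map_sub, map_sub, hφr, ← Rat.cast_intCast, hφ] at this
    linarith
  rw [linearIndependent_option]
  exact ⟨linearIndependent_proj_sub_proj (Fin.castLE_injective hNn.le) (fun k => φ (x k)) hu,
    notMem_span_of_apply_ne_zero (x := fun _ => 1) (fun i => by simp) (by simp; omega)⟩

/-- If the inhomogeneous system `x_i - x_{j(i)} = r - n_i` (`1 ≤ i ≤ N`),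
`x_1 + ⋯ + x_n = 0` has a solution with `r` irrational, then the `N + 1` linear
functionals `x ↦ x_i - x_{j(i)}` and `x ↦ ∑ x_k` on `ℝ^n` are linearly independent;
equivalently, the solution set is an affine subspace of dimension `n - 1 - N`. -/
theorem stmt15 (n N : ℕ) (hN : 1 ≤ N) (hNn : N < n)
    (r : ℝ) (hr : Irrational r)
    (j : Fin N → Fin n) (hj : ∀ i : Fin N, j i ≠ Fin.castLE hNn.le i)
    (c : Fin N → ℤ)
    (hsol : ∃ x : Fin n → ℝ,
      (∀ i : Fin N, x (Fin.castLE hNn.le i) - x (j i) = r - (c i : ℝ)) ∧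
      (∑ t : Fin n, x t) = 0) :
    LinearIndependent ℝ (fun o : Option (Fin N) =>
      o.elim (∑ t : Fin n, (LinearMap.proj t : (Fin n → ℝ) →ₗ[ℝ] ℝ))
        (fun i => (LinearMap.proj (Fin.castLE hNn.le i) : (Fin n → ℝ) →ₗ[ℝ] ℝ) -
          LinearMap.proj (j i))) :=
  stmt15_general n N hNn r hr j c hsol
end
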